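/- Let A be an associative unital ℂ-algebra, V a finite-dimensional ℂ-vector space, and ρ: A → End_ℂ(V) a ℂ-algebra homomorphism. Then the assignment f ↦ (e ↦ tr_V(e∘f)) induces a well-defined ℂ-linear isomorphism from the quotient space End_ℂ(V)/[ρ(A), End(V)] onto the dual vector space (End_A(V))*, where End_A(V) ⊆ End_ℂ(V) is the subspace of endomorphisms commuting with the action of A. -/

import Mathlib

/-!
Since the trace form `(f, g) ↦ tr(g ∘ f)` on `End(V)` is nondegenerate and
`tr(g [ρ a, h]) = tr([g, ρ a] h)`, the commutant `End_A(V)` is exactly the trace-orthogonal of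
the commutator space `[ρ(A), End V]`. For any nondegenerate pairing on a finite-dimensional space,
restricting to the orthogonal `C` of a subspace `I` gives a surjection onto `C*` whose kernel is
`C^⊥ = I^⊥⊥ = I`.
-/

variable {A : Type*} [Ring A] [Algebra ℂ A]
variable {V : Type*} [AddCommGroup V] [Module ℂ V]

def commutant (ρ : A →ₐ[ℂ] Module.End ℂ V) : Submodule ℂ (Module.End ℂ V) where
  carrier := {g | ∀ a : A, ρ a * g = g * ρ a}
  add_mem' := by
    intro f g hf hg a
    simp only [mul_add, add_mul, hf a, hg a]
  zero_mem' := by intro a; simp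
  smul_mem' := by
    intro c f hf a
    simp only [Algebra.mul_smul_comm, Algebra.smul_mul_assoc, hf a]

open LinearMap Module

section Duality

variable {K M : Type*} [Field K] [AddCommGroup M] [Module K M] [FiniteDimensional K M]
  {B : M →ₗ[K] Dual K M}

theorem Submodule.ker_dualRestrict_comp_eq_of_eq_dualCoannihilator (hB : Function.Injective B)
    (I : Submodule K M) {C : Submodule K M} (hC : C = (I.map B).dualCoannihilator) :
    ker (C.dualRestrict ∘ₗ B) = I := by
  subst hC
  rw [ker_comp, Submodule.dualRestrict_ker_eq_dualAnnihilator,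
    Subspace.dualCoannihilator_dualAnnihilator_eq, Submodule.comap_map_eq_of_injective hB]

theorem Submodule.surjective_dualRestrict_comp_of_injective (hB : Function.Injective B)
    (C : Submodule K M) : Function.Surjective (C.dualRestrict ∘ₗ B) :=
  (dualMap_surjective_of_injective C.injective_subtype).comp <|
    (injective_iff_surjective_of_finrank_eq_finrank Subspace.dual_finrank_eq.symm).mp hB

noncomputable def Submodule.quotEquivDualOfEqDualCoannihilator (hB : Function.Injective B)
    (I : Submodule K M) {C : Submodule K M} (hC : C = (I.map B).dualCoannihilator) :
    (M ⧸ I) ≃ₗ[K] Dual K C :=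
  (I.quotEquivOfEq _ (ker_dualRestrict_comp_eq_of_eq_dualCoannihilator hB I hC).symm).trans
    ((C.dualRestrict ∘ₗ B).quotKerEquivOfSurjective
      (surjective_dualRestrict_comp_of_injective hB C))

@[simp]
theorem Submodule.quotEquivDualOfEqDualCoannihilator_mk (hB : Function.Injective B)
    (I : Submodule K M) {C : Submodule K M} (hC : C = (I.map B).dualCoannihilator) (f : M)
    (g : C) : quotEquivDualOfEqDualCoannihilator hB I hC (Submodule.Quotient.mk f) g = B f g :=
  rfl

end Duality

section Trace

variable {R E : Type*} [CommRing R] [AddCommGroup E] [Module R E]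

theorem LinearMap.forall_trace_mul_eq_zero_iff [Module.Free R E] [Module.Finite R E]
    (f : Module.End R E) :
    (∀ g : Module.End R E, trace R E (g * f) = 0) ↔ f = 0 := by
  refine ⟨fun h ↦ ?_, fun hf g ↦ by rw [hf, mul_zero, map_zero]⟩
  ext v
  rw [zero_apply, ← forall_dual_apply_eq_zero_iff R]
  intro φ
  have hrank_one : dualTensorHom R E E (φ ⊗ₜ v) * f = dualTensorHom R E E ((φ ∘ₗ f) ⊗ₜ v) := by
    ext x
    simp [Module.End.mul_apply]
  simpa [hrank_one, trace_eq_contract_apply] using h (dualTensorHom R E E (φ ⊗ₜ v))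

theorem LinearMap.trace_mul_commutator (g x h : Module.End R E) :
    trace R E (g * (x * h - h * x)) = trace R E ((g * x - x * g) * h) := by
  rw [mul_sub, sub_mul, map_sub, map_sub, ← mul_assoc, ← mul_assoc, trace_mul_comm R (g * h),
    mul_assoc x]

variable (R E) in
noncomputable def Module.End.tracePairing : Module.End R E →ₗ[R] Dual R (Module.End R E) :=
  (LinearMap.mul R (Module.End R E)).flip.compr₂ (trace R E)

@[simp]
theorem Module.End.tracePairing_apply (f g : Module.End R E) :
    tracePairing R E f g = trace R E (g * f) :=
  rfl

theorem Module.End.tracePairing_injective [Module.Free R E] [Module.Finite R E] :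
    Function.Injective (tracePairing R E) :=
  (injective_iff_map_eq_zero _).mpr fun f hf ↦
    (forall_trace_mul_eq_zero_iff f).mp fun g ↦ LinearMap.congr_fun hf g

end Trace

theorem commutant_eq_dualCoannihilator_map_tracePairing [FiniteDimensional ℂ V]
    (ρ : A →ₐ[ℂ] Module.End ℂ V) :
    commutant ρ = ((Submodule.span ℂ {f : Module.End ℂ V | ∃ (a : A) (g : Module.End ℂ V),
      f = ρ a * g - g * ρ a}).map (Module.End.tracePairing ℂ V)).dualCoannihilator := by
  refine SetLike.coe_injective ?_
  rw [Submodule.map_span, Submodule.coe_dualCoannihilator_span]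
  ext g
  change (∀ a, ρ a * g = g * ρ a) ↔ _
  simp only [Set.mem_ofPred_eq, Set.forall_mem_image, forall_exists_index]
  constructor
  · rintro hg _ a h rfl
    rw [Module.End.tracePairing_apply, trace_mul_commutator, hg, sub_self, zero_mul, map_zero]
  · intro hg a
    have hcomm : g * ρ a - ρ a * g = 0 := by
      refine (forall_trace_mul_eq_zero_iff _).mp fun h ↦ ?_
      rw [trace_mul_comm, ← trace_mul_commutator]
      exact hg a h rfl
    exact (sub_eq_zero.mp hcomm).symm

/-- For a representation `ρ : A → End_ℂ(V)` on a finite-dimensional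
ℂ-vector space `V`, the pairing `f ↦ (e ↦ tr_V(e ∘ f))` induces a well-defined ℂ-linear
isomorphism `End_ℂ(V)/[ρ(A), End(V)] ≃ (End_A(V))*`. -/
theorem stmt2 [FiniteDimensional ℂ V] (ρ : A →ₐ[ℂ] Module.End ℂ V) :
    ∃ Φ : (Module.End ℂ V ⧸ Submodule.span ℂ
            {f : Module.End ℂ V | ∃ (a : A) (g : Module.End ℂ V), f = ρ a * g - g * ρ a})
          ≃ₗ[ℂ] Module.Dual ℂ (commutant ρ),
      ∀ (f : Module.End ℂ V) (g : commutant ρ),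
        Φ (Submodule.Quotient.mk f) g = LinearMap.trace ℂ V ((g : Module.End ℂ V) * f) :=
  ⟨Submodule.quotEquivDualOfEqDualCoannihilator Module.End.tracePairing_injective _
    (commutant_eq_dualCoannihilator_map_tracePairing ρ),
    Submodule.quotEquivDualOfEqDualCoannihilator_mk _ _ _⟩
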